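/- Let ε > 0, 0 < p ≤ 2, and let X be a real symmetric positive semidefinite n×n matrix. If 0 ≤ α ≤ ε^{(2−p)/2}/(2p), then the matrix X − 2αp·X·(XᵀX + εI)^{(p−2)/2} is positive semidefinite. -/

import Mathlib

/-
Since `X` is symmetric, `XᵀX + εI = X² + εI` is a function of `X`, so by the functional calculus
the gradient step is `f(X)` for `f(x) = x (1 - 2αp (x² + ε)^((p-2)/2))`. The exponent is
nonpositive, so `(x² + ε)^((p-2)/2) ≤ ε^((p-2)/2)`, and the step size bound makes the bracket
nonnegative; hence `f ≥ 0` on the spectrum of `X`, which lies in `[0, ∞)`.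
-/

open Matrix

/-- The real power of a symmetric matrix, defined spectrally: for a Hermitian matrix
`A` with eigendecomposition `A = U D U*`, `matRpow A r = U D^r U*` (junk value `0` if
`A` is not Hermitian). -/
noncomputable def matRpow {n : ℕ} (A : Matrix (Fin n) (Fin n) ℝ) (r : ℝ) :
    Matrix (Fin n) (Fin n) ℝ :=
  if hA : A.IsHermitian then
    (hA.eigenvectorUnitary : Matrix (Fin n) (Fin n) ℝ) *
      Matrix.diagonal (fun i => hA.eigenvalues i ^ r) *
      (star (hA.eigenvectorUnitary : Matrix (Fin n) (Fin n) ℝ))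
  else 0

open scoped MatrixOrder

theorem matRpow_eq_cfc {n : ℕ} {A : Matrix (Fin n) (Fin n) ℝ} (hA : A.IsHermitian) (r : ℝ) :
    matRpow A r = cfc (fun x : ℝ => x ^ r) A := by
  rw [matRpow, dif_pos hA, hA.cfc_eq, IsHermitian.cfc, Unitary.conjStarAlgAut_apply]
  rfl

theorem Real.mul_rpow_le_one_of_le {ε y c r : ℝ} (hε : 0 < ε) (hy : ε ≤ y) (hr : r ≤ 0)
    (hc : c * ε ^ r ≤ 1) : c * y ^ r ≤ 1 := by
  rcases le_or_gt 0 c with hc0 | hc0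
  · calc c * y ^ r ≤ c * ε ^ r :=
          mul_le_mul_of_nonneg_left (Real.rpow_le_rpow_of_nonpos hε hy hr) hc0
      _ ≤ 1 := hc
  · have : 0 < y ^ r := Real.rpow_pos_of_pos (hε.trans_le hy) r
    nlinarith

namespace Matrix

variable {n : Type*} [Fintype n] [DecidableEq n] {X : Matrix n n ℝ}

theorem sq_add_smul_one_eq_cfc (hX : X.IsHermitian) (ε : ℝ) :
    X * X + ε • 1 = cfc (fun x => x ^ 2 + ε) X := by
  rw [cfc_add_const _ _ X, cfc_pow_id X 2, Algebra.algebraMap_eq_smul_one, sq]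

-- The spectrum of a matrix is finite, so every function is continuous on it.
theorem cfc_cfc_eq_cfc_comp (hX : X.IsHermitian) (g f : ℝ → ℝ) :
    cfc g (cfc f X) = cfc (g ∘ f) X :=
  (cfc_comp' g f X ((X.finite_spectrum.image f).continuousOn g)
    (X.finite_spectrum.continuousOn f)).symm

theorem sub_smul_mul_cfc_eq_cfc (hX : X.IsHermitian) (c : ℝ) (f : ℝ → ℝ) :
    X - c • (X * cfc f X) = cfc (fun x => x - c * (x * f x)) X := by
  have hcont (g : ℝ → ℝ) : ContinuousOn g (spectrum ℝ X) := X.finite_spectrum.continuousOn g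
  rw [cfc_sub _ _ X (hcont _) (hcont _), cfc_const_mul _ _ X (hcont _),
    cfc_mul _ _ X (hcont _) (hcont _), cfc_id' ℝ X]

theorem PosSemidef.cfc_posSemidef (hX : X.PosSemidef) {f : ℝ → ℝ}
    (hf : ∀ x, 0 ≤ x → 0 ≤ f x) : (cfc f X).PosSemidef :=
  nonneg_iff_posSemidef.mp <|
    cfc_nonneg fun x hx => hf x (spectrum_nonneg_of_nonneg hX.nonneg hx)

end Matrix

theorem gradient_step_psd_schatten_general
    {n : ℕ} (ε p α : ℝ) (hε : 0 < ε) (hp0 : 0 < p) (hp2 : p ≤ 2)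
    (X : Matrix (Fin n) (Fin n) ℝ) (hX : X.PosSemidef)
    (hα : α ≤ ε ^ ((2 - p) / 2) / (2 * p)) :
    Matrix.PosSemidef
      (X - (2 * α * p) • (X * matRpow (Xᵀ * X + ε • 1) ((p - 2) / 2))) := by
  have hXt : Xᵀ = X := by rw [← X.conjTranspose_eq_transpose_of_trivial, hX.1]
  have hstep : 2 * α * p * ε ^ ((p - 2) / 2) ≤ 1 := by
    rw [le_div_iff₀ (by positivity)] at hα
    calc 2 * α * p * ε ^ ((p - 2) / 2) ≤ ε ^ ((2 - p) / 2) * ε ^ ((p - 2) / 2) := by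
          rw [show 2 * α * p = α * (2 * p) by ring]; gcongr
      _ = 1 := by rw [← Real.rpow_add hε, show (2 - p) / 2 + (p - 2) / 2 = (0 : ℝ) by ring,
            Real.rpow_zero]
  rw [hXt, sq_add_smul_one_eq_cfc hX.1, matRpow_eq_cfc (cfc_predicate (fun x : ℝ => x ^ 2 + ε) X),
    cfc_cfc_eq_cfc_comp hX.1, sub_smul_mul_cfc_eq_cfc hX.1]
  refine hX.cfc_posSemidef fun x hx => ?_
  have hbracket : 2 * α * p * (x ^ 2 + ε) ^ ((p - 2) / 2) ≤ 1 :=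
    Real.mul_rpow_le_one_of_le hε (by nlinarith) (by linarith) hstep
  simp only [Function.comp_apply]
  nlinarith

/-- First step of the proof of Theorem 3.2: for `ε > 0`, `0 < p ≤ 2`, a real symmetric
PSD `n×n` matrix `X`, and `0 ≤ α ≤ ε^((2-p)/2) / (2p)`, the plain gradient step
`X - 2αp·X·(XᵀX + εI)^((p-2)/2)` is positive semidefinite. -/
theorem gradient_step_psd_schatten
    {n : ℕ} (ε p α : ℝ) (hε : 0 < ε) (hp0 : 0 < p) (hp2 : p ≤ 2)
    (X : Matrix (Fin n) (Fin n) ℝ) (hX : X.PosSemidef)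
    (hα0 : 0 ≤ α) (hα : α ≤ ε ^ ((2 - p) / 2) / (2 * p)) :
    Matrix.PosSemidef
      (X - (2 * α * p) • (X * matRpow (Xᵀ * X + ε • 1) ((p - 2) / 2))) :=
  gradient_step_psd_schatten_general ε p α hε hp0 hp2 X hX hα
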